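/- arXiv:1412.7553 — 3 statements merged into one kernel-verified Lean document; each statement's English description precedes it below -/
import Mathlib

section
/- For all integers b ≥ 1, m ≥ 1 and all odd integers a with 1 ≤ a ≤ 2m−1, set 2n = 2ab + 2m and p = [(2b+1)^{a}(1)^{2m-a}]. Then the partition c = [(2b+1)^{a-1}(2b)(2)(1)^{2m-a-1}] is the Sp_{2n}-collapse of p; that is, c is a special symplectic partition of 2n, c ≤ p in the dominance order, and every special symplectic partition of 2n that is ≤ p in the dominance order is ≤ c in the dominance order. -/
namespace JLFourier

/-- The partition whose parts (indexed from `0`) are the entries of the list `l`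
(entries beyond the list, and zero entries, count as absent parts). -/
def ofList (l : List ℕ) : ℕ → ℕ := fun i => l.getD i 0

/-- The transpose of a partition `p`: its `k`-th part (indexed from `0`) is the
number of parts of `p` that are at least `k + 1`. -/
noncomputable def transpose (p : ℕ → ℕ) : ℕ → ℕ := fun k => {i | k + 1 ≤ p i}.ncard

/-- `p` is a partition of `N`: a weakly decreasing, eventually zero function
`ℕ → ℕ` (listing the parts in decreasing order, indexed from `0`) with sum `N`. -/
def IsPartition (p : ℕ → ℕ) (N : ℕ) : Prop :=
  Antitone p ∧ ∃ n, (∀ i, n ≤ i → p i = 0) ∧ ∑ i ∈ Finset.range n, p i = N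

/-- The multiplicity of `d` as a part of `p`. -/
noncomputable def mult (p : ℕ → ℕ) (d : ℕ) : ℕ := {i | p i = d}.ncard

/-- A symplectic partition of `N`: every odd part occurs with even multiplicity. -/
def IsSymplectic (p : ℕ → ℕ) (N : ℕ) : Prop :=
  IsPartition p N ∧ ∀ d, Odd d → Even (mult p d)

/-- A special symplectic partition: a symplectic partition whose transpose is
also a symplectic partition. -/
def IsSpecialSymplectic (p : ℕ → ℕ) (N : ℕ) : Prop :=
  IsSymplectic p N ∧ IsSymplectic (transpose p) N

/-- An orthogonal partition of `N`: every (positive) even part occurs with even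
multiplicity. -/
def IsOrthogonal (p : ℕ → ℕ) (N : ℕ) : Prop :=
  IsPartition p N ∧ ∀ d, 0 < d → Even d → Even (mult p d)

/-- A special orthogonal partition: an orthogonal partition whose transpose is
also an orthogonal partition. -/
def IsSpecialOrthogonal (p : ℕ → ℕ) (N : ℕ) : Prop :=
  IsOrthogonal p N ∧ IsOrthogonal (transpose p) N

/-- Dominance order: `DomLE p q` means `p ≤ q`, i.e. for every `k` the sum of the
`k` largest parts of `p` is at most the sum of the `k` largest parts of `q`. -/
def DomLE (p q : ℕ → ℕ) : Prop :=
  ∀ k, ∑ i ∈ Finset.range k, p i ≤ ∑ i ∈ Finset.range k, q i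


lemma ofList_replicate_append (n x : ℕ) (l : List ℕ) (i : ℕ) :
    ofList (List.replicate n x ++ l) i = if i < n then x else ofList l (i - n) := by
  unfold ofList
  split_ifs with h
  · rw [List.getD_append _ _ _ _ (by simpa using h), List.getD_eq_getElem _ _ (by simpa using h)]
    simp
  · rw [List.getD_append_right _ _ _ _ (by simpa using not_lt.mp h), List.length_replicate]

lemma ofList_cons (x : ℕ) (l : List ℕ) (i : ℕ) :
    ofList (x :: l) i = if i = 0 then x else ofList l (i - 1) := by
  cases i <;> simp [ofList]

lemma ofList_nil (i : ℕ) : ofList [] i = 0 := by simp [ofList]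

lemma ofList_replicate (n x : ℕ) (i : ℕ) :
    ofList (List.replicate n x) i = if i < n then x else 0 := by
  rw [show List.replicate n x = List.replicate n x ++ [] from by simp, ofList_replicate_append]
  simp [ofList_nil]

lemma transpose_antitone {p : ℕ → ℕ} {n : ℕ} (h0 : ∀ i, n ≤ i → p i = 0) :
    Antitone (transpose p) := by
  intro j k hjk
  apply Set.ncard_le_ncard
  · intro i hi
    simp only [Set.mem_setOf_eq] at hi ⊢
    omega
  · apply Set.Finite.subset (Set.finite_Iio n)
    intro i hi
    simp only [Set.mem_setOf_eq] at hi
    simp only [Set.mem_Iio]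
    by_contra hni
    have := h0 i (by omega)
    omega

lemma sum_Ico_const' (f : ℕ → ℕ) {v m n : ℕ} (hf : ∀ i, m ≤ i → i < n → f i = v) :
    ∑ i ∈ Finset.Ico m n, f i = (n - m) * v := by
  rw [Finset.sum_congr rfl (fun i hi => hf i (Finset.mem_Ico.mp hi).1 (Finset.mem_Ico.mp hi).2),
    Finset.sum_const, Nat.card_Ico, smul_eq_mul]

theorem stmt4 (a b m : ℕ) (hb : 1 ≤ b) (hm : 1 ≤ m) (haodd : Odd a)
    (ha1 : 1 ≤ a) (ha2 : a ≤ 2 * m - 1) :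
    IsSpecialSymplectic (ofList (List.replicate (a - 1) (2 * b + 1) ++ [2 * b, 2] ++ List.replicate (2 * m - a - 1) 1)) (2 * a * b + 2 * m) ∧
    DomLE (ofList (List.replicate (a - 1) (2 * b + 1) ++ [2 * b, 2] ++ List.replicate (2 * m - a - 1) 1))
      (ofList (List.replicate a (2 * b + 1) ++ List.replicate (2 * m - a) 1)) ∧
    ∀ c : ℕ → ℕ, IsSpecialSymplectic c (2 * a * b + 2 * m) →
      DomLE c (ofList (List.replicate a (2 * b + 1) ++ List.replicate (2 * m - a) 1)) →
      DomLE c (ofList (List.replicate (a - 1) (2 * b + 1) ++ [2 * b, 2] ++ List.replicate (2 * m - a - 1) 1)) := by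
  obtain ⟨s, hs⟩ := haodd
  obtain ⟨u, hu⟩ : ∃ u, m = s + 1 + u := ⟨m - (s + 1), by omega⟩
  obtain ⟨b', rfl⟩ : ∃ b', b = b' + 1 := ⟨b - 1, by omega⟩
  subst hs hu
  rw [show 2 * (s + 1 + u) - (2 * s + 1) - 1 = 2 * u from by omega,
      show 2 * (s + 1 + u) - (2 * s + 1) = 2 * u + 1 from by omega,
      show 2 * s + 1 - 1 = 2 * s from by omega]
  set B := b' + 1 with hB
  set cP := ofList (List.replicate (2 * s) (2 * B + 1) ++ [2 * B, 2] ++ List.replicate (2 * u) 1) with hcP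
  set pP := ofList (List.replicate (2 * s + 1) (2 * B + 1) ++ List.replicate (2 * u + 1) 1) with hpP
  have hc : ∀ i, cP i = if i < 2 * s then 2 * B + 1 else if i = 2 * s then 2 * B
      else if i = 2 * s + 1 then 2 else if i < 2 * s + 2 * u + 2 then 1 else 0 := by
    intro i
    rw [hcP, List.append_assoc, ofList_replicate_append]
    simp only [List.cons_append, List.nil_append]
    rw [ofList_cons, ofList_cons, ofList_replicate]
    split_ifs <;> omega
  have hp : ∀ i, pP i = if i < 2 * s + 1 then 2 * B + 1
      else if i < 2 * s + 2 * u + 2 then 1 else 0 := by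
    intro i
    rw [hpP, ofList_replicate_append, ofList_replicate]
    split_ifs <;> omega
  -- closed form for transpose of cP
  have ht : ∀ k, transpose cP k = if k = 0 then 2 * s + 2 * u + 2 else if k = 1 then 2 * s + 2
      else if k < 2 * B then 2 * s + 1 else if k = 2 * B then 2 * s else 0 := by
    intro k
    have key : ∀ v : ℕ, {i | k + 1 ≤ cP i} = ↑(Finset.range v) → transpose cP k = v := by
      intro v hv
      show Set.ncard _ = v
      rw [hv, Set.ncard_coe_finset, Finset.card_range]
    split_ifs with h0 h1 h2 h3 <;>
      [skip; skip; skip; skip; (apply key 0)] <;>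
      [apply key; apply key; apply key; apply key; skip] <;>
      · ext i
        simp only [Set.mem_setOf_eq, Finset.coe_range, Set.mem_Iio]
        rw [hc i]
        split_ifs <;> omega
  -- pointwise difference identity
  have hdiff : ∀ i, (pP i : ℤ) - cP i =
      (if i = 2 * s then (1 : ℤ) else 0) - (if i = 2 * s + 1 then 1 else 0) := by
    intro i
    rw [hc i, hp i]
    split_ifs <;> push_cast <;> omega
  have hdom : ∀ k, ((∑ i ∈ Finset.range k, pP i : ℕ) : ℤ) - ((∑ i ∈ Finset.range k, cP i : ℕ) : ℤ) =
      (if 2 * s ∈ Finset.range k then (1 : ℤ) else 0)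
        - (if 2 * s + 1 ∈ Finset.range k then 1 else 0) := by
    intro k
    push_cast
    rw [← Finset.sum_sub_distrib, Finset.sum_congr rfl (fun i _ => hdiff i),
      Finset.sum_sub_distrib, Finset.sum_ite_eq', Finset.sum_ite_eq']
  -- partial sums of pP
  have hSp : ∀ k, k ≤ 2 * s + 1 → ∑ i ∈ Finset.range k, pP i = k * (2 * B + 1) := by
    intro k hk
    rw [Finset.range_eq_Ico,
      sum_Ico_const' pP (v := 2 * B + 1) (m := 0) (n := k)
        (fun i h1 h2 => by rw [hp i]; split_ifs <;> omega)]
    rw [Nat.sub_zero]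
  have hpsum : ∑ i ∈ Finset.range (2 * s + 2 * u + 2), pP i = 2 * (2 * s + 1) * B + 2 * (s + 1 + u) := by
    rw [Finset.range_eq_Ico,
      ← Finset.sum_Ico_consecutive _ (show 0 ≤ 2 * s + 1 from by omega)
        (show 2 * s + 1 ≤ 2 * s + 2 * u + 2 from by omega),
      sum_Ico_const' pP (v := 2 * B + 1) (m := 0) (n := 2 * s + 1)
        (fun i h1 h2 => by rw [hp i]; split_ifs <;> omega),
      sum_Ico_const' pP (v := 1) (m := 2 * s + 1) (n := 2 * s + 2 * u + 2)
        (fun i h1 h2 => by rw [hp i]; split_ifs <;> omega),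
      Nat.sub_zero, show 2 * s + 2 * u + 2 - (2 * s + 1) = 2 * u + 1 from by omega]
    ring
  -- sum of cP
  have hcsum : ∑ i ∈ Finset.range (2 * s + 2 * u + 2), cP i = 2 * (2 * s + 1) * B + 2 * (s + 1 + u) := by
    have h := hdom (2 * s + 2 * u + 2)
    simp only [Finset.mem_range] at h
    split_ifs at h <;> omega
  have hczero : ∀ i, 2 * s + 2 * u + 2 ≤ i → cP i = 0 := by
    intro i hi; rw [hc i]; split_ifs <;> omega
  have hcanti : Antitone cP := by
    intro i j hij; rw [hc i, hc j]; split_ifs <;> omega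
  have htzero : ∀ k, 2 * B + 1 ≤ k → transpose cP k = 0 := by
    intro k hk; rw [ht k]; split_ifs <;> omega
  have htsum : ∑ k ∈ Finset.range (2 * B + 1), transpose cP k = 2 * (2 * s + 1) * B + 2 * (s + 1 + u) := by
    rw [Finset.range_eq_Ico,
      ← Finset.sum_Ico_consecutive _ (show 0 ≤ 2 * B from by omega) (show 2 * B ≤ 2 * B + 1 from by omega),
      ← Finset.sum_Ico_consecutive _ (show (0:ℕ) ≤ 2 from by omega) (show 2 ≤ 2 * B from by omega),
      ← Finset.sum_Ico_consecutive _ (show (0:ℕ) ≤ 1 from by omega) (show (1:ℕ) ≤ 2 from by omega),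
      sum_Ico_const' (transpose cP) (v := 2 * s + 2 * u + 2) (m := 0) (n := 1)
        (fun i h1 h2 => by rw [ht i]; split_ifs <;> omega),
      sum_Ico_const' (transpose cP) (v := 2 * s + 2) (m := 1) (n := 2)
        (fun i h1 h2 => by rw [ht i]; split_ifs <;> omega),
      sum_Ico_const' (transpose cP) (v := 2 * s + 1) (m := 2) (n := 2 * B)
        (fun i h1 h2 => by rw [ht i]; split_ifs <;> omega),
      sum_Ico_const' (transpose cP) (v := 2 * s) (m := 2 * B) (n := 2 * B + 1)
        (fun i h1 h2 => by rw [ht i]; split_ifs <;> omega)]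
    rw [show 2 * B - 2 = 2 * b' from by omega, show 2 * B + 1 - 2 * B = 1 from by omega, hB]
    ring
  have hcmult : ∀ d, Odd d → Even (mult cP d) := by
    intro d hd
    have hd2 := Nat.odd_iff.mp hd
    show Even {i | cP i = d}.ncard
    by_cases h1 : d = 2 * B + 1
    · have hset : {i | cP i = d} = ↑(Finset.range (2 * s)) := by
        ext i
        simp only [Set.mem_setOf_eq, Finset.coe_range, Set.mem_Iio]
        rw [hc i]
        split_ifs <;> omega
      rw [hset, Set.ncard_coe_finset, Finset.card_range]
      exact ⟨s, by ring⟩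
    · by_cases h2 : d = 1
      · have hset : {i | cP i = d} = ↑(Finset.Ico (2 * s + 2) (2 * s + 2 * u + 2)) := by
          ext i
          simp only [Set.mem_setOf_eq, Finset.coe_Ico, Set.mem_Ico]
          rw [hc i]
          split_ifs <;> omega
        rw [hset, Set.ncard_coe_finset, Nat.card_Ico,
          show 2 * s + 2 * u + 2 - (2 * s + 2) = 2 * u from by omega]
        exact ⟨u, by ring⟩
      · have hset : {i | cP i = d} = (∅ : Set ℕ) := by
          ext i
          simp only [Set.mem_setOf_eq, Set.mem_empty_iff_false, iff_false]
          rw [hc i]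
          split_ifs <;> omega
        rw [hset, Set.ncard_empty]
        exact Even.zero
  have htmult : ∀ d, Odd d → Even (mult (transpose cP) d) := by
    intro d hd
    have hd2 := Nat.odd_iff.mp hd
    show Even {k | transpose cP k = d}.ncard
    by_cases h1 : d = 2 * s + 1
    · have hset : {k | transpose cP k = d} = ↑(Finset.Ico 2 (2 * B)) := by
        ext k
        simp only [Set.mem_setOf_eq, Finset.coe_Ico, Set.mem_Ico]
        rw [ht k]
        split_ifs <;> omega
      rw [hset, Set.ncard_coe_finset, Nat.card_Ico, show 2 * B - 2 = 2 * b' from by omega]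
      exact ⟨b', by ring⟩
    · have hset : {k | transpose cP k = d} = (∅ : Set ℕ) := by
        ext k
        simp only [Set.mem_setOf_eq, Set.mem_empty_iff_false, iff_false]
        rw [ht k]
        split_ifs <;> omega
      rw [hset, Set.ncard_empty]
      exact Even.zero
  refine ⟨⟨⟨⟨hcanti, 2 * s + 2 * u + 2, hczero, hcsum⟩, hcmult⟩,
    ⟨⟨transpose_antitone hczero, 2 * B + 1, htzero, htsum⟩, htmult⟩⟩, ?_, ?_⟩
  · intro k
    have h := hdom k
    simp only [Finset.mem_range] at h
    split_ifs at h <;> omega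
  · intro q hq hqp
    intro k
    by_cases hk : k = 2 * s + 1
    · subst hk
      have hcval : ∑ i ∈ Finset.range (2 * s + 1), cP i = 2 * s * (2 * B + 1) + 2 * B := by
        rw [Finset.sum_range_succ, Finset.range_eq_Ico,
          sum_Ico_const' cP (v := 2 * B + 1) (m := 0) (n := 2 * s)
            (fun i h1 h2 => by rw [hc i]; split_ifs <;> omega),
          Nat.sub_zero, show cP (2 * s) = 2 * B from by rw [hc]; split_ifs <;> omega]
      have h1 := hqp (2 * s + 1)
      rw [hSp _ le_rfl] at h1
      have hexp : (2 * s + 1) * (2 * B + 1) = 2 * s * (2 * B + 1) + 2 * B + 1 := by ring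
      have hne : ∑ i ∈ Finset.range (2 * s + 1), q i ≠ (2 * s + 1) * (2 * B + 1) := by
        intro heq
        have hA : Antitone q := hq.1.1.1
        have hq0 : q 0 ≤ 2 * B + 1 := by
          have h2 := hqp 1
          rw [hSp 1 (by omega), Finset.sum_range_one] at h2
          omega
        have hq2s : 2 * B + 1 ≤ q (2 * s) := by
          have e1 := Finset.sum_range_succ q (2 * s)
          have h2 := hqp (2 * s)
          rw [hSp (2 * s) (by omega)] at h2
          have hexp2 : (2 * s + 1) * (2 * B + 1) = 2 * s * (2 * B + 1) + (2 * B + 1) := by ring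
          omega
        have hall : ∀ i, i ≤ 2 * s → q i = 2 * B + 1 := by
          intro i hi
          have l1 : q i ≤ q 0 := hA (Nat.zero_le i)
          have l2 : q (2 * s) ≤ q i := hA hi
          omega
        by_cases hex : ∃ j, 2 * s + 1 ≤ j ∧ q j = 2 * B + 1
        · obtain ⟨j, hj1, hj2⟩ := hex
          have l3 : q j ≤ q (2 * s + 1) := hA hj1
          have e2 := Finset.sum_range_succ q (2 * s + 1)
          have h4 := hqp (2 * s + 1 + 1)
          have e3 := Finset.sum_range_succ pP (2 * s + 1)
          rw [hSp (2 * s + 1) le_rfl] at e3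
          have l4 : pP (2 * s + 1) = 1 := by rw [hp]; split_ifs <;> omega
          omega
        · push_neg at hex
          have hset : {i | q i = 2 * B + 1} = ↑(Finset.range (2 * s + 1)) := by
            ext i
            simp only [Set.mem_setOf_eq, Finset.coe_range, Set.mem_Iio]
            constructor
            · intro h
              by_contra hni
              exact hex i (by omega) h
            · intro h
              exact hall i (by omega)
          have hev := hq.1.2 (2 * B + 1) ⟨B, rfl⟩
          have hm1 : mult q (2 * B + 1) = 2 * s + 1 := by
            show {i | q i = 2 * B + 1}.ncard = 2 * s + 1
            rw [hset, Set.ncard_coe_finset, Finset.card_range]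
          rw [hm1] at hev
          obtain ⟨r, hr⟩ := hev
          omega
      omega
    · have h := hdom k
      simp only [Finset.mem_range] at h
      have hqk := hqp k
      split_ifs at h <;> omega

end JLFourier
end

section
/- For all integers b ≥ 1 and m ≥ 0, let a = 2m+1, let q = [(2b+1)^{a}] (a partition of 2n+1 where 2n = 2ab + 2m), and let q^- = [(2b+1)^{a-1}(2b)]. Then there is a special symplectic partition c of 2n such that c ≤ q^- in the dominance order and every special symplectic partition of 2n that is ≤ q^- in the dominance order is ≤ c, and the transpose of c is [(a)^{2b}(2m)]; in other words, the Barbasch–Vogan dual η_{so_{2n+1},sp_{2n}}(q) equals [(a)^{2b}(2m)]. -/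
namespace JLFourier

def step (a x y : ℕ) : ℕ → ℕ := fun i => if i < a then x else if i = a then y else 0

lemma ofList_eq_step (a x y : ℕ) :
    ofList (List.replicate a x ++ [y]) = step a x y := by
  funext i
  simp only [ofList, step]
  rcases lt_trichotomy i a with h | h | h
  · rw [List.getD_append _ _ _ _ (by simpa using h)]
    simp [List.getD_eq_getElem?_getD, h]
  · subst h
    rw [List.getD_append_right _ _ _ _ (by simp)]
    simp
  · rw [List.getD_append_right _ _ _ _ (by simp; omega)]
    simp only [List.length_replicate]
    rw [List.getD_eq_default _ _ (by simp; omega)]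
    split_ifs <;> omega

lemma ncard_setOf_lt (a : ℕ) : {i : ℕ | i < a}.ncard = a := by
  rw [show {i : ℕ | i < a} = ↑(Finset.range a) by ext i; simp,
    Set.ncard_coe_finset, Finset.card_range]

lemma isPartition_step (a x y : ℕ) (hyx : y ≤ x) :
    IsPartition (step a x y) (a * x + y) := by
  refine ⟨fun i j hij => ?_, a + 1, fun i hi => ?_, ?_⟩
  · simp only [step]; split_ifs <;> omega
  · simp only [step]; split_ifs <;> omega
  · rw [Finset.sum_range_succ,
      Finset.sum_congr rfl (fun i hi => show step a x y i = x by
        simp only [step, if_pos (Finset.mem_range.mp hi)]),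
      Finset.sum_const, Finset.card_range, smul_eq_mul]
    simp [step]

lemma mult_step_even (a x y : ℕ) (ha : Even a) (hy : Even y) :
    ∀ d, Odd d → Even (mult (step a x y) d) := by
  intro d hd
  have hd0 : d ≠ 0 := by rintro rfl; exact (Nat.not_odd_iff_even.mpr Even.zero) hd
  have hdy : d ≠ y := by rintro rfl; exact (Nat.not_odd_iff_even.mpr hy) hd
  by_cases hdx : d = x
  · have hs : {i | step a x y i = d} = {i : ℕ | i < a} := by
      ext i; simp only [step, Set.mem_setOf_eq]
      split_ifs <;> omega
    rw [mult, hs, ncard_setOf_lt]; exact ha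
  · have hs : {i | step a x y i = d} = ∅ := by
      ext i; simp only [step, Set.mem_setOf_eq, Set.mem_empty_iff_false, iff_false]
      split_ifs <;> omega
    rw [mult, hs, Set.ncard_empty]; exact Even.zero

lemma transpose_step (a y : ℕ) (hy : 1 ≤ y) :
    transpose (step a (y + 1) y) = step y (a + 1) a := by
  funext k
  simp only [transpose]
  rcases lt_trichotomy k y with h | h | h
  · have hs : {i | k + 1 ≤ step a (y + 1) y i} = {i : ℕ | i < a + 1} := by
      ext i; simp only [step, Set.mem_setOf_eq]
      split_ifs <;> omega
    rw [hs, ncard_setOf_lt]; simp only [step]; rw [if_pos h]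
  · subst h
    have hs : {i | k + 1 ≤ step a (k + 1) k i} = {i : ℕ | i < a} := by
      ext i; simp only [step, Set.mem_setOf_eq]
      split_ifs <;> omega
    rw [hs, ncard_setOf_lt]; simp [step]
  · have hs : {i | k + 1 ≤ step a (y + 1) y i} = ∅ := by
      ext i; simp only [step, Set.mem_setOf_eq, Set.mem_empty_iff_false, iff_false]
      split_ifs <;> omega
    rw [hs, Set.ncard_empty]; simp only [step]
    rw [if_neg (by omega), if_neg (by omega)]


theorem stmt9 (b m : ℕ) (hb : 1 ≤ b) :
    ∃ c : ℕ → ℕ,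
      IsSpecialSymplectic c (2 * (2 * m + 1) * b + 2 * m) ∧
      DomLE c (ofList (List.replicate (2 * m) (2 * b + 1) ++ [2 * b])) ∧
      (∀ c' : ℕ → ℕ, IsSpecialSymplectic c' (2 * (2 * m + 1) * b + 2 * m) →
        DomLE c' (ofList (List.replicate (2 * m) (2 * b + 1) ++ [2 * b])) → DomLE c' c) ∧
      transpose c = ofList (List.replicate (2 * b) (2 * m + 1) ++ [2 * m]) := by
  refine ⟨ofList (List.replicate (2 * m) (2 * b + 1) ++ [2 * b]), ?_,
    fun k => le_rfl, fun c' _ h => h, ?_⟩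
  · rw [ofList_eq_step]
    refine ⟨⟨?_, mult_step_even _ _ _ ⟨m, by ring⟩ ⟨b, by ring⟩⟩, ?_⟩
    · have h1 : 2 * m * (2 * b + 1) + 2 * b = 2 * (2 * m + 1) * b + 2 * m := by ring
      exact h1 ▸ isPartition_step (2 * m) (2 * b + 1) (2 * b) (by omega)
    · rw [transpose_step _ _ (by omega)]
      refine ⟨?_, mult_step_even _ _ _ ⟨b, by ring⟩ ⟨m, by ring⟩⟩
      have h2 : 2 * b * (2 * m + 1) + 2 * m = 2 * (2 * m + 1) * b + 2 * m := by ring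
      exact h2 ▸ isPartition_step (2 * b) (2 * m + 1) (2 * m) (by omega)
  · rw [ofList_eq_step, ofList_eq_step, transpose_step _ _ (by omega)]


end JLFourier
end

section
/- For all integers b ≥ 1, m ≥ 1 and all odd integers a with 1 ≤ a ≤ 2m−1, let q = [(2b+1)^{a}(1)^{2m+1-a}] (a partition of 2n+1 where 2n = 2ab + 2m), and let q^- = [(2b+1)^{a}(1)^{2m-a}]. Then there is a special symplectic partition c of 2n such that c ≤ q^- in the dominance order and every special symplectic partition of 2n that is ≤ q^- in the dominance order is ≤ c, and the transpose of c is [(2m)(a+1)(a)^{2b-2}(a-1)]; in other words, the Barbasch–Vogan dual η_{so_{2n+1},sp_{2n}}(q) equals [(2m)(a+1)(a)^{2b-2}(a-1)]. -/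
namespace JLFourier

/-! ### Auxiliary definitions -/

/-- Explicit formula for `q⁻ = [(2b+1)^a, 1^(2m-a)]`. -/
def qf (a b m : ℕ) : ℕ → ℕ := fun i =>
  if i < a then 2*b+1 else if i < 2*m then 1 else 0

/-- Explicit formula for the collapse `c = [(2b+1)^(a-1), 2b, 2, 1^(2m-a-1)]`. -/
def cf (a b m : ℕ) : ℕ → ℕ := fun i =>
  if i < a-1 then 2*b+1 else if i = a-1 then 2*b else if i = a then 2
  else if i < 2*m then 1 else 0

/-- Explicit formula for the transpose `[2m, a+1, a^(2b-2), a-1]`. -/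
def tf (a b m : ℕ) : ℕ → ℕ := fun k =>
  if k = 0 then 2*m else if k = 1 then a+1 else if k < 2*b then a
  else if k = 2*b then a-1 else 0

/-! ### List lemmas -/

lemma getD_replicate_append (n x : ℕ) (l : List ℕ) (j : ℕ) :
    (List.replicate n x ++ l).getD j 0 = if j < n then x else l.getD (j - n) 0 := by
  induction n generalizing j with
  | zero => simp
  | succ n ih =>
    cases j with
    | zero => simp [List.replicate_succ]
    | succ j =>
      have hidx : j + 1 - (n + 1) = j - n := by omega
      simp only [List.replicate_succ, List.cons_append, List.getD_cons_succ, ih j, hidx]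
      split_ifs <;> first | rfl | omega

lemma getD_replicate (n x j : ℕ) :
    (List.replicate n x).getD j 0 = if j < n then x else 0 := by
  simpa using getD_replicate_append n x [] j

lemma getD_singleton (x j : ℕ) : ([x] : List ℕ).getD j 0 = if j = 0 then x else 0 := by
  cases j <;> simp

lemma ofList_q (a b m : ℕ) (h : a ≤ 2*m) :
    ofList (List.replicate a (2*b+1) ++ List.replicate (2*m-a) 1) = qf a b m := by
  funext i
  simp only [ofList, qf, getD_replicate_append, getD_replicate]
  split_ifs <;> first | omega | exact ‹False›.elim

lemma ofList_t (a b m : ℕ) (hb : 1 ≤ b) :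
    ofList ([2*m, a+1] ++ List.replicate (2*b-2) a ++ [a-1]) = tf a b m := by
  funext k
  match k with
  | 0 => simp [ofList, tf]
  | 1 => simp [ofList, tf]
  | (k+2) =>
    simp only [ofList, tf, List.append_assoc, List.cons_append, List.nil_append, List.getD_cons_succ]
    rw [getD_replicate_append, getD_singleton]
    split_ifs <;> first | omega | exact ‹False›.elim

/-! ### Partial sums -/

lemma sum_two_block (a M X : ℕ) (k : ℕ) :
    ∑ i ∈ Finset.range k, (if i < a then X else if i < M then 1 else 0)
      = min k a * X + (min k M - min k a) := by
  induction k with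
  | zero => simp
  | succ k ih =>
    rw [Finset.sum_range_succ, ih]
    rcases lt_or_ge k a with h1 | h1
    · have h2 : min (k+1) a = min k a + 1 := by omega
      rw [h2, add_mul, one_mul]
      simp only [if_pos h1]
      omega
    · have h2 : min (k+1) a = min k a := by omega
      rw [h2]
      split_ifs <;> first | omega | exact ‹False›.elim

lemma sum_qf (a b m : ℕ) (k : ℕ) :
    ∑ i ∈ Finset.range k, qf a b m i
      = min k a * (2*b+1) + (min k (2*m) - min k a) := by
  simpa [qf] using sum_two_block a (2*m) (2*b+1) k

lemma sum_qf_le_a (a b m : ℕ) (k : ℕ) (hk : k ≤ a) (h : a ≤ 2*m) :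
    ∑ i ∈ Finset.range k, qf a b m i = k * (2*b+1) := by
  rw [sum_qf]
  have h1 : min k a = k := by omega
  have h2 : min k (2*m) = k := by omega
  rw [h1, h2]
  omega

lemma sum_qf_succ_a (a b m : ℕ) (h : a < 2*m) :
    ∑ i ∈ Finset.range (a+1), qf a b m i = a * (2*b+1) + 1 := by
  rw [sum_qf]
  have h1 : min (a+1) a = a := by omega
  have h2 : min (a+1) (2*m) = a + 1 := by omega
  rw [h1, h2]
  omega

lemma cf_qf_pointwise (a b m : ℕ) (ha1 : 1 ≤ a) (hb : 1 ≤ b) (ha2m : a < 2*m) (i : ℕ) :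
    cf a b m i + (if i = a-1 then 1 else 0) = qf a b m i + (if i = a then 1 else 0) := by
  simp only [cf, qf]
  split_ifs <;> first | omega | exact ‹False›.elim

lemma sum_cf_qf (a b m : ℕ) (ha1 : 1 ≤ a) (hb : 1 ≤ b) (ha2m : a < 2*m) (k : ℕ) :
    ∑ i ∈ Finset.range k, cf a b m i + (if a-1 < k then 1 else 0)
      = ∑ i ∈ Finset.range k, qf a b m i + (if a < k then 1 else 0) := by
  have h1 : ∑ i ∈ Finset.range k, (cf a b m i + (if i = a-1 then 1 else 0))
      = ∑ i ∈ Finset.range k, (qf a b m i + (if i = a then 1 else 0)) :=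
    Finset.sum_congr rfl (fun i _ => cf_qf_pointwise a b m ha1 hb ha2m i)
  rw [Finset.sum_add_distrib, Finset.sum_add_distrib,
    Finset.sum_ite_eq' (Finset.range k) (a-1) (fun _ => 1),
    Finset.sum_ite_eq' (Finset.range k) a (fun _ => 1)] at h1
  simpa [Finset.mem_range] using h1

/-! ### ncard helpers -/

lemma ncard_setOf_range (P : ℕ → Prop) (n : ℕ) (h : ∀ i, P i ↔ i < n) :
    {i | P i}.ncard = n := by
  have he : {i | P i} = ↑(Finset.range n) := by
    ext i; simp [h]
  rw [he, Set.ncard_coe_finset, Finset.card_range]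

lemma ncard_setOf_Ico (P : ℕ → Prop) (u v : ℕ) (h : ∀ i, P i ↔ u ≤ i ∧ i < v) :
    {i | P i}.ncard = v - u := by
  have he : {i | P i} = ↑(Finset.Ico u v) := by
    ext i; simp [h]
  rw [he, Set.ncard_coe_finset, Nat.card_Ico]

lemma ncard_setOf_empty (P : ℕ → Prop) (h : ∀ i, ¬ P i) :
    {i | P i}.ncard = 0 := by
  have he : {i | P i} = (∅ : Set ℕ) := by
    ext i; simp [h]
  simp [he]

/-! ### c is a symplectic partition -/

lemma cf_partition (a b m : ℕ) (ha1 : 1 ≤ a) (hb : 1 ≤ b) (ha2m : a < 2*m) :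
    IsPartition (cf a b m) (2*a*b + 2*m) := by
  constructor
  · apply antitone_nat_of_succ_le
    intro i
    simp only [cf]
    split_ifs <;> first | omega | exact ‹False›.elim
  · refine ⟨2*m, fun i hi => ?_, ?_⟩
    · simp only [cf]; split_ifs <;> first | omega | exact ‹False›.elim
    · have h := sum_cf_qf a b m ha1 hb ha2m (2*m)
      rw [if_pos (by omega : a - 1 < 2*m), if_pos ha2m] at h
      rw [sum_qf] at h
      have h1 : min (2*m) a = a := by omega
      have h2 : min (2*m) (2*m) = 2*m := by omega
      rw [h1, h2] at h
      have h3 : a * (2*b+1) = 2*a*b + a := by ring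
      omega

lemma cf_mult (a b m : ℕ) (ha1 : 1 ≤ a) (hb : 1 ≤ b) (ha2m : a < 2*m) (haodd : Odd a) :
    ∀ d, Odd d → Even (mult (cf a b m) d) := by
  obtain ⟨s, hs⟩ := haodd
  rintro d ⟨t, ht⟩
  by_cases h1 : d = 2*b+1
  · have he : mult (cf a b m) d = a - 1 :=
      ncard_setOf_range _ _ (fun i => by simp only [cf]; split_ifs <;> first | omega | exact ‹False›.elim)
    rw [he]
    exact ⟨s, by omega⟩
  · by_cases h2 : d = 1
    · have he : mult (cf a b m) d = 2*m - (a+1) :=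
        ncard_setOf_Ico _ _ _ (fun i => by simp only [cf]; split_ifs <;> first | omega | exact ‹False›.elim)
      rw [he]
      exact ⟨m - s - 1, by omega⟩
    · have he : mult (cf a b m) d = 0 :=
        ncard_setOf_empty _ (fun i => by simp only [cf]; split_ifs <;> first | omega | exact ‹False›.elim)
      rw [he]
      exact Even.zero

/-! ### Transpose of c -/

lemma transpose_cf (a b m : ℕ) (ha1 : 1 ≤ a) (hb : 1 ≤ b) (ha2m : a < 2*m) :
    transpose (cf a b m) = tf a b m := by
  funext k
  show {i | k + 1 ≤ cf a b m i}.ncard = tf a b m k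
  by_cases hk0 : k = 0
  · subst hk0
    rw [show tf a b m 0 = 2*m from by simp [tf]]
    exact ncard_setOf_range _ _ (fun i => by simp only [cf]; split_ifs <;> first | omega | exact ‹False›.elim)
  · by_cases hk1 : k = 1
    · subst hk1
      rw [show tf a b m 1 = a+1 from by simp [tf]]
      exact ncard_setOf_range _ _ (fun i => by simp only [cf]; split_ifs <;> first | omega | exact ‹False›.elim)
    · by_cases hk2 : k < 2*b
      · rw [show tf a b m k = a from by simp only [tf, if_neg hk0, if_neg hk1, if_pos hk2]]
        exact ncard_setOf_range _ _ (fun i => by simp only [cf]; split_ifs <;> first | omega | exact ‹False›.elim)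
      · by_cases hk3 : k = 2*b
        · rw [show tf a b m k = a-1 from by simp only [tf, if_neg hk0, if_neg hk1, if_neg hk2, if_pos hk3]]
          exact ncard_setOf_range _ _ (fun i => by simp only [cf]; split_ifs <;> first | omega | exact ‹False›.elim)
        · rw [show tf a b m k = 0 from by simp only [tf, if_neg hk0, if_neg hk1, if_neg hk2, if_neg hk3]]
          exact ncard_setOf_empty _ (fun i => by simp only [cf]; split_ifs <;> first | omega | exact ‹False›.elim)

/-! ### tf is a symplectic partition -/

lemma sum_tf (a b m : ℕ) (ha1 : 1 ≤ a) (hb : 1 ≤ b) :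
    ∑ k ∈ Finset.range (2*b+1), tf a b m k = 2*a*b + 2*m := by
  have hpt : ∀ k, tf a b m k = (if k = 0 then 2*m else 0)
      + ((if k = 1 then a+1 else 0)
      + ((if 2 ≤ k ∧ k < 2*b then a else 0) + (if k = 2*b then a-1 else 0))) := by
    intro k
    simp only [tf]
    split_ifs <;> first | omega | exact ‹False›.elim
  rw [Finset.sum_congr rfl (fun k _ => hpt k)]
  rw [Finset.sum_add_distrib, Finset.sum_add_distrib, Finset.sum_add_distrib]
  rw [Finset.sum_ite_eq' (Finset.range (2*b+1)) 0 (fun _ => 2*m),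
    Finset.sum_ite_eq' (Finset.range (2*b+1)) 1 (fun _ => a+1),
    Finset.sum_ite_eq' (Finset.range (2*b+1)) (2*b) (fun _ => a-1)]
  have hfil : Finset.filter (fun k => 2 ≤ k ∧ k < 2*b) (Finset.range (2*b+1))
      = Finset.Ico 2 (2*b) := by
    ext k
    simp only [Finset.mem_filter, Finset.mem_range, Finset.mem_Ico]
    omega
  rw [← Finset.sum_filter, hfil, Finset.sum_const, Nat.card_Ico, smul_eq_mul]
  have h0 : (0 : ℕ) ∈ Finset.range (2*b+1) := by simp
  have h1 : (1 : ℕ) ∈ Finset.range (2*b+1) := by simp; omega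
  have h2 : (2*b : ℕ) ∈ Finset.range (2*b+1) := by simp
  rw [if_pos h0, if_pos h1, if_pos h2]
  obtain ⟨a', rfl⟩ : ∃ a', a = a' + 1 := ⟨a-1, by omega⟩
  obtain ⟨b', rfl⟩ : ∃ b', b = b' + 1 := ⟨b-1, by omega⟩
  have e1 : 2*(b'+1) - 2 = 2*b' := by omega
  have e2 : a' + 1 - 1 = a' := by omega
  rw [e1, e2]
  ring

lemma tf_partition (a b m : ℕ) (ha1 : 1 ≤ a) (hb : 1 ≤ b) (ha2m : a < 2*m) :
    IsPartition (tf a b m) (2*a*b + 2*m) := by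
  constructor
  · apply antitone_nat_of_succ_le
    intro i
    simp only [tf]
    split_ifs <;> first | omega | exact ‹False›.elim
  · exact ⟨2*b+1, fun i hi => by simp only [tf]; split_ifs <;> first | omega | exact ‹False›.elim,
      sum_tf a b m ha1 hb⟩

lemma tf_mult (a b m : ℕ) (ha1 : 1 ≤ a) (hb : 1 ≤ b) (hm : 1 ≤ m) (haodd : Odd a) :
    ∀ d, Odd d → Even (mult (tf a b m) d) := by
  obtain ⟨s, hs⟩ := haodd
  rintro d ⟨t, ht⟩
  by_cases h1 : d = a
  · have he : mult (tf a b m) d = 2*b - 2 :=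
      ncard_setOf_Ico _ _ _ (fun k => by simp only [tf]; split_ifs <;> first | omega | exact ‹False›.elim)
    rw [he]
    exact ⟨b - 1, by omega⟩
  · have he : mult (tf a b m) d = 0 :=
      ncard_setOf_empty _ (fun k => by simp only [tf]; split_ifs <;> first | omega | exact ‹False›.elim)
    rw [he]
    exact Even.zero

/-! ### The main theorem -/

theorem stmt11 (a b m : ℕ) (hb : 1 ≤ b) (hm : 1 ≤ m) (haodd : Odd a)
    (ha1 : 1 ≤ a) (ha2 : a ≤ 2 * m - 1) :
    ∃ c : ℕ → ℕ,
      IsSpecialSymplectic c (2 * a * b + 2 * m) ∧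
      DomLE c (ofList (List.replicate a (2 * b + 1) ++ List.replicate (2 * m - a) 1)) ∧
      (∀ c' : ℕ → ℕ, IsSpecialSymplectic c' (2 * a * b + 2 * m) →
        DomLE c' (ofList (List.replicate a (2 * b + 1) ++ List.replicate (2 * m - a) 1)) → DomLE c' c) ∧
      transpose c = ofList ([2 * m, a + 1] ++ List.replicate (2 * b - 2) a ++ [a - 1]) := by
  have ha2m : a < 2*m := by omega
  have hofq : ofList (List.replicate a (2*b+1) ++ List.replicate (2*m-a) 1) = qf a b m :=
    ofList_q a b m (by omega)
  have htr : transpose (cf a b m) = tf a b m := transpose_cf a b m ha1 hb ha2m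
  refine ⟨cf a b m, ⟨⟨cf_partition a b m ha1 hb ha2m, cf_mult a b m ha1 hb ha2m haodd⟩, ?_⟩,
    ?_, ?_, ?_⟩
  · rw [htr]
    exact ⟨tf_partition a b m ha1 hb ha2m, tf_mult a b m ha1 hb hm haodd⟩
  · rw [hofq]
    intro k
    have h := sum_cf_qf a b m ha1 hb ha2m k
    split_ifs at h <;> omega
  · intro c' hc' hd
    rw [hofq] at hd
    intro k
    have h := sum_cf_qf a b m ha1 hb ha2m k
    by_cases hk : k = a
    · rw [hk] at h ⊢
      rw [if_pos (by omega : a - 1 < a), if_neg (by omega : ¬ a < a)] at h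
      have hqa : ∑ i ∈ Finset.range a, qf a b m i = a * (2*b+1) :=
        sum_qf_le_a a b m a le_rfl (by omega)
      have hSa : ∑ i ∈ Finset.range a, c' i ≤ a * (2*b+1) := by
        have := hd a; rw [hqa] at this; exact this
      -- suffices: the partial sum of c' at a is strictly less than a*(2b+1)
      rcases lt_or_eq_of_le hSa with hlt | heq
      · omega
      · exfalso
        -- all of the first a parts of c' equal 2b+1, contradicting symplecticity
        have hmono := hc'.1.1.1
        have hS1 : c' 0 ≤ 2*b+1 := by
          have h1 := hd 1
          rw [sum_qf_le_a a b m 1 ha1 (by omega)] at h1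
          simpa using h1
        have hSam : ∑ i ∈ Finset.range (a-1), c' i ≤ (a-1) * (2*b+1) := by
          have h1 := hd (a-1)
          rw [sum_qf_le_a a b m (a-1) (by omega) (by omega)] at h1
          exact h1
        have e1 : a * (2*b+1) = (a-1)*(2*b+1) + (2*b+1) := by
          conv_lhs => rw [show a = (a-1) + 1 from by omega]
          rw [add_mul, one_mul]
        have hsplit : ∑ i ∈ Finset.range (a-1), c' i + c' (a-1)
            = ∑ i ∈ Finset.range a, c' i := by
          conv_rhs => rw [show a = (a-1) + 1 from by omega]
          rw [Finset.sum_range_succ]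
        have hlast : 2*b+1 ≤ c' (a-1) := by omega
        have hall : ∀ i, i < a → c' i = 2*b+1 := by
          intro i hi
          have hub : c' i ≤ 2*b+1 := le_trans (hmono (Nat.zero_le i)) hS1
          have hlb : 2*b+1 ≤ c' i := le_trans hlast (hmono (by omega : i ≤ a-1))
          omega
        have hca : c' a ≤ 1 := by
          have h1 := hd (a+1)
          rw [sum_qf_succ_a a b m ha2m] at h1
          rw [Finset.sum_range_succ] at h1
          omega
        have hmult : mult c' (2*b+1) = a := by
          apply ncard_setOf_range
          intro i
          constructor
          · intro hv
            by_contra hge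
            have : c' i ≤ c' a := hmono (by omega : a ≤ i)
            omega
          · exact hall i
        have heven := hc'.1.2 (2*b+1) ⟨b, by ring⟩
        rw [hmult] at heven
        obtain ⟨r, hr⟩ := heven
        obtain ⟨s, hs⟩ := haodd
        omega
    · have hdk := hd k
      split_ifs at h <;> omega
  · rw [htr]
    exact (ofList_t a b m hb).symm

end JLFourier
end
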